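/- arXiv:1405.2378 — 6 statements merged into one kernel-verified Lean document; each statement's English description precedes it below -/
import Mathlib

section
/- The function f(φ) = sin(φ)/(1 + sin(φ/2)) on the interval (0, 2π/3] attains its maximum at φ₀ = 2·arctan(√((√5−1)/2)), and its maximum value is 2·((√5−1)/2)^{5/2}. -/
/-! With `s = sin (φ/2)`, the square of `f φ = 2 s cos (φ/2) / (1 + s)` is `4 s² (1 - s) / (1 + s)`,
and for the golden ratio conjugate `g = (√5 - 1)/2`, a root of `g² = 1 - g`,
`g⁵ (1 + s)² - s² (1 - s²) = (1 + s) (s - g)² (s + 2g - 1)`.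
The right-hand side is nonnegative for `s ≥ 0`, so `f ≤ 2 √(g⁵)`, with equality at `s = g`,
i.e. where `tan (φ/2) = √g`. -/

open Real

section GoldenConj

variable {g : ℝ} (hg : g ^ 2 = 1 - g) (hg0 : 0 < g)
include hg hg0

theorem sq_mul_one_sub_sq_le_of_sq_eq_one_sub {s : ℝ} (hs : 0 ≤ s) :
    s ^ 2 * (1 - s ^ 2) ≤ g ^ 5 * (1 + s) ^ 2 := by
  have hg_half : 1 ≤ 2 * g := by nlinarith
  have factor : g ^ 5 * (1 + s) ^ 2 - s ^ 2 * (1 - s ^ 2)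
      = (1 + s) * (s - g) ^ 2 * (s + 2 * g - 1) := by
    linear_combination ((1 + s) ^ 2 * (g ^ 3 - g ^ 2 + 2 * g - 3)
      + (1 + s) * (3 * s - 2 * g + 3)) * hg
  have : 0 ≤ (1 + s) * (s - g) ^ 2 * (s + 2 * g - 1) :=
    mul_nonneg (mul_nonneg (by linarith) (sq_nonneg _)) (by linarith)
  linarith

theorem sin_div_one_add_sin_half_le {x : ℝ} (hx : 0 ≤ sin (x / 2)) :
    sin x / (1 + sin (x / 2)) ≤ 2 * g ^ 2 * √g := by
  set s := sin (x / 2)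
  set c := cos (x / 2)
  have hsin : sin x = 2 * s * c := by rw [← sin_two_mul, mul_div_cancel₀ x two_ne_zero]
  have hc : c ^ 2 = 1 - s ^ 2 := by linarith [sin_sq_add_cos_sq (x / 2)]
  rw [hsin, div_le_iff₀ (by linarith)]
  refine le_of_sq_le_sq ?_ (by positivity)
  calc (2 * s * c) ^ 2 = 4 * (s ^ 2 * (1 - s ^ 2)) := by rw [mul_pow, hc]; ring
    _ ≤ 4 * (g ^ 5 * (1 + s) ^ 2) := by
      gcongr 4 * ?_; exact sq_mul_one_sub_sq_le_of_sq_eq_one_sub hg hg0 hx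
    _ = (2 * g ^ 2 * √g * (1 + s)) ^ 2 := by rw [mul_pow, mul_pow, sq_sqrt hg0.le]; ring

theorem sin_arctan_sqrt_of_sq_eq_one_sub : sin (arctan √g) = g ∧ cos (arctan √g) = √g := by
  have hsqrt : √(1 + √g ^ 2) = (√g)⁻¹ := by
    rw [sq_sqrt hg0.le, ← sqrt_inv, show 1 + g = g⁻¹ by field_simp; linarith]
  have hsqrt_pos : 0 < √g := sqrt_pos.mpr hg0
  rw [sin_arctan, cos_arctan, hsqrt]
  constructor
  · field_simp; exact sq_sqrt hg0.le
  · field_simp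

theorem sin_div_one_add_sin_half_two_mul_arctan_sqrt :
    sin (2 * arctan √g) / (1 + sin (2 * arctan √g / 2)) = 2 * g ^ 2 * √g := by
  obtain ⟨hsin, hcos⟩ := sin_arctan_sqrt_of_sq_eq_one_sub hg hg0
  rw [mul_div_cancel_left₀ _ two_ne_zero, sin_two_mul, hsin, hcos,
    show 1 + g = g⁻¹ by field_simp; linarith]
  field_simp

end GoldenConj

theorem sq_sqrt_five_sub_one_div_two :
    ((√5 - 1) / 2) ^ 2 = 1 - (√5 - 1) / 2 := by
  nlinarith [sq_sqrt (show (0 : ℝ) ≤ 5 by norm_num)]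

theorem sqrt_five_sub_one_div_two_mem_Ioo : (√5 - 1) / 2 ∈ Set.Ioo 0 1 := by
  have h5 := sq_sqrt (show (0 : ℝ) ≤ 5 by norm_num)
  constructor <;> nlinarith [sqrt_nonneg 5]

/-- The function `f(φ) = sin φ / (1 + sin (φ/2))` on `(0, 2π/3]` attains its maximum
at `φ₀ = 2·arctan √((√5−1)/2)`, with maximum value `2·((√5−1)/2)^(5/2)`. -/
theorem max_of_sin_ratio :
    let f : ℝ → ℝ := fun φ => Real.sin φ / (1 + Real.sin (φ / 2))
    let φ₀ : ℝ := 2 * Real.arctan (Real.sqrt ((Real.sqrt 5 - 1) / 2))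
    φ₀ ∈ Set.Ioc 0 (2 * π / 3) ∧
    (∀ φ ∈ Set.Ioc (0 : ℝ) (2 * π / 3), f φ ≤ f φ₀) ∧
    f φ₀ = 2 * ((Real.sqrt 5 - 1) / 2) ^ ((5 : ℝ) / 2) := by
  intro f φ₀
  obtain ⟨hg0, hg1⟩ := sqrt_five_sub_one_div_two_mem_Ioo
  have hg := sq_sqrt_five_sub_one_div_two
  have hf₀ : f φ₀ = 2 * ((√5 - 1) / 2) ^ 2 * √((√5 - 1) / 2) :=
    sin_div_one_add_sin_half_two_mul_arctan_sqrt hg hg0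
  have hφ₀_le : arctan √((√5 - 1) / 2) ≤ π / 4 := by
    rw [← arctan_one]
    exact arctan_mono (sqrt_le_one.mpr hg1.le)
  refine ⟨⟨by simpa [φ₀] using sqrt_pos.mpr hg0, by linarith [pi_pos]⟩, ?_, ?_⟩
  · rintro φ ⟨hφ0, hφ⟩
    rw [hf₀]
    exact sin_div_one_add_sin_half_le hg hg0
      (sin_nonneg_of_nonneg_of_le_pi (by linarith) (by linarith [pi_pos]))
  · rw [hf₀, show (5 : ℝ) / 2 = 2 + 1 / 2 by norm_num, rpow_add hg0, rpow_two, ← sqrt_eq_rpow]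
    ring
end

section
/- The polynomial Φ(x) = 40x¹² + 508x¹¹ + 1071x¹⁰ + 930x⁹ − 265x⁸ − 1464x⁷ − 1450x⁶ − 524x⁵ + 58x⁴ + 76x³ + 3x² − 6x − 1 has exactly one positive real root, and this root lies in the interval (1.105, 1.106). -/
/-!
Shifting to `x = 1 + t` turns `Φ` into `-1024` plus a polynomial in `t` with positive
coefficients, so `Φ` is strictly increasing on `[1, ∞)`. On `(0, 1]` it is negative, because
its coefficients in the Bernstein basis of degree 14 on `[0, 1]` all are. Since
`Φ 1.105 < 0 < Φ 1.106`, the intermediate value theorem gives the root, and monotonicity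
makes it unique.
-/

open Set

section RootLocation

variable {f : ℝ → ℝ} {a l u : ℝ}

theorem root_mem_Ioo_of_strictMonoOn (hmono : StrictMonoOn f (Ici a))
    (hneg : ∀ x ∈ Ioc 0 a, f x < 0) (hal : a ≤ l) (hlu : l ≤ u) (hl : f l < 0) (hu : 0 < f u)
    {x : ℝ} (hx : 0 < x) (hfx : f x = 0) : x ∈ Ioo l u := by
  have hax : a ≤ x := by
    by_contra! h
    exact (hneg x ⟨hx, h.le⟩).ne hfx
  refine ⟨?_, ?_⟩
  · exact (hmono.lt_iff_lt (mem_Ici.2 hal) (mem_Ici.2 hax)).1 (hfx ▸ hl)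
  · exact (hmono.lt_iff_lt (mem_Ici.2 hax) (mem_Ici.2 (hal.trans hlu))).1 (hfx ▸ hu)

theorem existsUnique_pos_root_of_strictMonoOn (hf : ContinuousOn f (Icc l u))
    (hmono : StrictMonoOn f (Ici a)) (hneg : ∀ x ∈ Ioc 0 a, f x < 0) (hl0 : 0 < l)
    (hal : a ≤ l) (hlu : l ≤ u) (hl : f l < 0) (hu : 0 < f u) :
    (∃! x, 0 < x ∧ f x = 0) ∧ ∀ x, 0 < x → f x = 0 → l < x ∧ x < u := by
  have hloc : ∀ ⦃x⦄, 0 < x → f x = 0 → x ∈ Ioo l u := fun _ =>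
    root_mem_Ioo_of_strictMonoOn hmono hneg hal hlu hl hu
  obtain ⟨x₀, hx₀, hfx₀⟩ := intermediate_value_Icc hlu hf ⟨hl.le, hu.le⟩
  have hx₀pos : 0 < x₀ := hl0.trans_le hx₀.1
  refine ⟨⟨x₀, ⟨hx₀pos, hfx₀⟩, fun y ⟨hy, hfy⟩ => ?_⟩, fun x hx hfx => hloc hx hfx⟩
  have hay : y ∈ Ici a := mem_Ici.2 (hal.trans (hloc hy hfy).1.le)
  have hax₀ : x₀ ∈ Ici a := mem_Ici.2 (hal.trans hx₀.1)
  exact hmono.injOn hay hax₀ (hfy.trans hfx₀.symm)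

end RootLocation

def phi (x : ℝ) : ℝ :=
  40 * x ^ 12 + 508 * x ^ 11 + 1071 * x ^ 10 + 930 * x ^ 9 - 265 * x ^ 8
    - 1464 * x ^ 7 - 1450 * x ^ 6 - 524 * x ^ 5 + 58 * x ^ 4 + 76 * x ^ 3
    + 3 * x ^ 2 - 6 * x - 1

theorem continuous_phi : Continuous phi := by
  unfold phi
  fun_prop

theorem phi_one_add (t : ℝ) :
    phi (1 + t) = 40 * t ^ 12 + 988 * t ^ 11 + 9299 * t ^ 10 + 48380 * t ^ 9
      + 159920 * t ^ 8 + 357736 * t ^ 7 + 555568 * t ^ 6 + 598640 * t ^ 5 + 435428 * t ^ 4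
      + 199248 * t ^ 3 + 47680 * t ^ 2 + 1920 * t - 1024 := by
  unfold phi
  ring

theorem strictMonoOn_phi : StrictMonoOn phi (Ici 1) := by
  intro x hx y hy hxy
  obtain ⟨s, hs, rfl⟩ : ∃ s, 0 ≤ s ∧ 1 + s = x := ⟨x - 1, by linarith [mem_Ici.1 hx], by ring⟩
  obtain ⟨t, rfl⟩ : ∃ t, 1 + t = y := ⟨y - 1, by ring⟩
  have hst : s < t := by linarith
  rw [phi_one_add, phi_one_add]
  gcongr

theorem phi_neg_of_mem_Ioc {x : ℝ} (hx : x ∈ Ioc 0 1) : phi x < 0 := by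
  obtain ⟨hx0, hx1⟩ := hx
  have h0 : 0 ≤ x := hx0.le
  have h1 : 0 ≤ 1 - x := by linarith
  unfold phi
  nlinarith [pow_pos hx0 14, pow_nonneg h1 14,
    mul_nonneg (pow_nonneg h0 1) (pow_nonneg h1 13),
    mul_nonneg (pow_nonneg h0 2) (pow_nonneg h1 12),
    mul_nonneg (pow_nonneg h0 3) (pow_nonneg h1 11),
    mul_nonneg (pow_nonneg h0 4) (pow_nonneg h1 10),
    mul_nonneg (pow_nonneg h0 5) (pow_nonneg h1 9),
    mul_nonneg (pow_nonneg h0 6) (pow_nonneg h1 8),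
    mul_nonneg (pow_nonneg h0 7) (pow_nonneg h1 7),
    mul_nonneg (pow_nonneg h0 8) (pow_nonneg h1 6),
    mul_nonneg (pow_nonneg h0 9) (pow_nonneg h1 5),
    mul_nonneg (pow_nonneg h0 10) (pow_nonneg h1 4),
    mul_nonneg (pow_nonneg h0 11) (pow_nonneg h1 3),
    mul_nonneg (pow_nonneg h0 12) (pow_nonneg h1 2),
    mul_nonneg (pow_nonneg h0 13) (pow_nonneg h1 1)]

/-- The degree twelve polynomial `Φ` has exactly one positive real root, and this root
lies in the interval `(1.105, 1.106)`. -/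
theorem unique_positive_root_Phi :
    let Φ : ℝ → ℝ := fun x =>
      40 * x ^ 12 + 508 * x ^ 11 + 1071 * x ^ 10 + 930 * x ^ 9 - 265 * x ^ 8
        - 1464 * x ^ 7 - 1450 * x ^ 6 - 524 * x ^ 5 + 58 * x ^ 4 + 76 * x ^ 3
        + 3 * x ^ 2 - 6 * x - 1
    (∃! x : ℝ, 0 < x ∧ Φ x = 0) ∧
    ∀ x : ℝ, 0 < x → Φ x = 0 → 1.105 < x ∧ x < 1.106 := by
  intro Φ
  have hl : phi 1.105 < 0 := by norm_num [phi]
  have hu : 0 < phi 1.106 := by norm_num [phi]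
  exact existsUnique_pos_root_of_strictMonoOn continuous_phi.continuousOn strictMonoOn_phi
    (fun _ => phi_neg_of_mem_Ioc) (by norm_num) (by norm_num) (by norm_num) hl hu
end

section
/- Let S = [0,1]² be the unit square and let ℓ be a line intersecting the interior of S in two points that lie on two adjacent sides of S. Then the reflection across ℓ of the (triangular) component of S \ ℓ cut off by those two sides is contained in S; consequently the folded shape (the union of the uncut part of S and the reflected triangle) is contained in S. -/
/-!
An isometry fixing `T = (0, t)` and `B = (b, 0)` sends the corner `0` to a point `u` with
`|uT| = |0T|` and `|uB| = |0B|`; these two circle equations force `u = 0` or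
`u = (2bt², 2tb²) / (t² + b²)`, the mirror image of the corner. Its coordinates lie in `[0, 1]`
since `2bt² ≤ 2bt ≤ t² + b²`. The image of the triangle is the convex hull of the images of its
vertices `u, T, B`, all of which lie in the convex square.
-/

open Set

def unitSquare : Set (EuclideanSpace ℝ (Fin 2)) := {x | 0 ≤ x 0 ∧ x 0 ≤ 1 ∧ 0 ≤ x 1 ∧ x 1 ≤ 1}

lemma mem_unitSquare_iff (a c : ℝ) : !₂[a, c] ∈ unitSquare ↔ a ∈ Icc 0 1 ∧ c ∈ Icc 0 1 := by
  simp [unitSquare, and_assoc]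

lemma convex_unitSquare : Convex ℝ unitSquare := by
  rintro p ⟨hp₀, hp₁, hp₂, hp₃⟩ q ⟨hq₀, hq₁, hq₂, hq₃⟩ a c ha hc hac
  refine ⟨?_, ?_, ?_, ?_⟩ <;> simp only [PiLp.add_apply, PiLp.smul_apply, smul_eq_mul] <;> nlinarith

lemma dist_sq_eq_fin_two (p q : EuclideanSpace ℝ (Fin 2)) :
    dist p q ^ 2 = (p 0 - q 0) ^ 2 + (p 1 - q 1) ^ 2 := by
  rw [EuclideanSpace.dist_sq_eq, Fin.sum_univ_two, Real.dist_eq, Real.dist_eq, sq_abs, sq_abs]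

/-- The mirror image of the origin in the line through `(0, t)` and `(b, 0)`. -/
noncomputable def foldPoint (t b : ℝ) : EuclideanSpace ℝ (Fin 2) :=
  !₂[2 * b * t ^ 2 / (t ^ 2 + b ^ 2), 2 * t * b ^ 2 / (b ^ 2 + t ^ 2)]

lemma eq_foldPoint_of_dist_eq {t b : ℝ} (ht : t ≠ 0) {u : EuclideanSpace ℝ (Fin 2)} (hu : u ≠ 0)
    (hT : dist u !₂[0, t] = dist 0 !₂[0, t]) (hB : dist u !₂[b, 0] = dist 0 !₂[b, 0]) :
    u = foldPoint t b := by
  have eT := congrArg (· ^ 2) hT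
  have eB := congrArg (· ^ 2) hB
  simp only [dist_sq_eq_fin_two, PiLp.zero_apply, Fin.isValue, Matrix.cons_val_zero,
    Matrix.cons_val_one, Matrix.cons_val_fin_one, sub_zero, zero_sub, neg_sq] at eT eB
  set x := u 0
  set y := u 1
  have hxy : t * y = b * x := by linear_combination (eB - eT) / 2
  have hx : x ≠ 0 := by
    intro hx
    have hy : y = 0 := by simpa [hx, ht] using hxy
    exact hu (by ext i; fin_cases i <;> assumption)
  have hx' : x * (t ^ 2 + b ^ 2) = 2 * b * t ^ 2 :=
    mul_left_cancel₀ hx (by linear_combination t ^ 2 * eB - (t * y + b * x) * hxy)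
  have hy' : y * (b ^ 2 + t ^ 2) = 2 * t * b ^ 2 :=
    mul_left_cancel₀ ht (by linear_combination (t ^ 2 + b ^ 2) * hxy + b * hx')
  ext i
  fin_cases i
  · exact (eq_div_iff (by positivity)).mpr hx'
  · exact (eq_div_iff (by positivity)).mpr hy'

lemma two_mul_mul_sq_div_mem_Icc {a c : ℝ} (ha : 0 ≤ a) (hc₀ : 0 ≤ c) (hc₁ : c ≤ 1) :
    2 * a * c ^ 2 / (c ^ 2 + a ^ 2) ∈ Icc 0 1 := by
  refine ⟨by positivity, div_le_one_of_le₀ ?_ (by positivity)⟩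
  nlinarith [sq_nonneg (c - a), mul_le_mul_of_nonneg_left hc₁ (mul_nonneg ha hc₀)]

lemma foldPoint_mem_unitSquare {t b : ℝ} (ht₀ : 0 ≤ t) (ht₁ : t ≤ 1) (hb₀ : 0 ≤ b) (hb₁ : b ≤ 1) :
    foldPoint t b ∈ unitSquare :=
  (mem_unitSquare_iff _ _).2
    ⟨two_mul_mul_sq_div_mem_Icc hb₀ ht₀ ht₁, two_mul_mul_sq_div_mem_Icc ht₀ hb₀ hb₁⟩

/-- Folding the unit square along a line crossing two adjacent sides: the reflection of
the triangular corner component across the fold line stays inside the square, and hence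
so does the whole folded shape. The reflection is characterized as the isometry fixing
the two crossing points and moving the corner `(0,0)`. -/
theorem square_fold_adjacent_sides (t b : ℝ) (ht : 0 < t) (ht1 : t < 1)
    (hb : 0 < b) (hb1 : b < 1) :
    let S : Set (EuclideanSpace ℝ (Fin 2)) :=
      {x | 0 ≤ x 0 ∧ x 0 ≤ 1 ∧ 0 ≤ x 1 ∧ x 1 ≤ 1}
    let Tpt : EuclideanSpace ℝ (Fin 2) := !₂[0, t]
    let Bpt : EuclideanSpace ℝ (Fin 2) := !₂[b, 0]
    let tri : Set (EuclideanSpace ℝ (Fin 2)) := convexHull ℝ {0, Tpt, Bpt}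
    ∀ f : EuclideanSpace ℝ (Fin 2) ≃ᵃⁱ[ℝ] EuclideanSpace ℝ (Fin 2),
      f Tpt = Tpt → f Bpt = Bpt → f 0 ≠ 0 →
      (f '' tri ⊆ S ∧ (S \ tri) ∪ f '' tri ⊆ S) := by
  intro S Tpt Bpt tri f hT hB h0
  have hdT : dist (f 0) Tpt = dist 0 Tpt := by simpa only [hT] using f.dist_map 0 Tpt
  have hdB : dist (f 0) Bpt = dist 0 Bpt := by simpa only [hB] using f.dist_map 0 Bpt
  have hf0 : f 0 = foldPoint t b := eq_foldPoint_of_dist_eq ht.ne' h0 hdT hdB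
  have himage : f '' tri = convexHull ℝ {f 0, f Tpt, f Bpt} := by
    rw [← image_pair, ← image_insert_eq]
    exact f.toAffineEquiv.toAffineMap.image_convexHull _
  rw [hf0, hT, hB] at himage
  have hsub : f '' tri ⊆ S := by
    rw [himage]
    refine convexHull_min ?_ convex_unitSquare
    refine insert_subset (foldPoint_mem_unitSquare ht.le ht1.le hb.le hb1.le) (pair_subset ?_ ?_)
    · exact (mem_unitSquare_iff 0 t).2 ⟨left_mem_Icc.2 zero_le_one, ht.le, ht1.le⟩
    · exact (mem_unitSquare_iff b 0).2 ⟨⟨hb.le, hb1.le⟩, left_mem_Icc.2 zero_le_one⟩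
  exact ⟨hsub, union_subset (fun z hz => hz.1) hsub⟩
end

section
/- Let 𝒦 be a family of closed disks in ℝ², each with center lying in a closed half-plane ℓ⁺ bounded by a line ℓ, and let L = ⋂ 𝒦 be their intersection. Then the reflection across ℓ of L \ ℓ⁺ is contained in L ∩ ℓ⁺. -/
open Metric

/-! A disk whose center lies in `ℓ⁺` contains, with any point `x ∉ ℓ⁺`, the mirror image of `x`:
the reflection moves `x` along the normal `n` by twice its height `t = ⟪x, n⟫ - c` above `ℓ`,
while `x` sits at height at least `t` above every center, so the squared distance to each center
drops by `4t (⟪x - o, n⟫ - t) ≥ 0`. -/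

section

variable {E : Type*} [NormedAddCommGroup E] [InnerProductSpace ℝ E]

/-- The reflection across the hyperplane `{x | ⟪x, n⟫ = c}`, for a unit normal `n`. -/
def hyperplaneReflection (n : E) (c : ℝ) (x : E) : E :=
  x - (2 * (inner ℝ x n - c)) • n

variable {n : E} {c : ℝ}

theorem inner_hyperplaneReflection (hn : ‖n‖ = 1) (x : E) :
    inner ℝ (hyperplaneReflection n c x) n = 2 * c - inner ℝ x n := by
  rw [hyperplaneReflection, inner_sub_left, real_inner_smul_left, real_inner_self_eq_norm_sq, hn]
  ring

theorem dist_hyperplaneReflection_le (hn : ‖n‖ = 1) {x y : E}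
    (hx : c ≤ inner ℝ x n) (hy : inner ℝ y n ≤ c) :
    dist (hyperplaneReflection n c x) y ≤ dist x y := by
  set t := inner ℝ x n - c
  have hxy : t ≤ inner ℝ (x - y) n := by rw [inner_sub_left]; linarith
  have hsq : dist (hyperplaneReflection n c x) y ^ 2
      = dist x y ^ 2 - 4 * t * (inner ℝ (x - y) n - t) := by
    rw [dist_eq_norm, dist_eq_norm, hyperplaneReflection, sub_right_comm, norm_sub_sq_real,
      real_inner_smul_right, norm_smul, Real.norm_eq_abs, mul_pow, sq_abs, hn]
    ring
  refine (sq_le_sq₀ dist_nonneg dist_nonneg).1 ?_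
  rw [hsq]
  nlinarith

end

theorem disk_intersection_fold_general {ι : Type*}
    (o : ι → EuclideanSpace ℝ (Fin 2)) (rad : ι → ℝ)
    (n : EuclideanSpace ℝ (Fin 2)) (c : ℝ) (hn : ‖n‖ = 1)
    (ho : ∀ i, (inner ℝ (o i) n : ℝ) ≤ c) :
    let L : Set (EuclideanSpace ℝ (Fin 2)) := ⋂ i, closedBall (o i) (rad i)
    ∀ x ∈ L \ {x : EuclideanSpace ℝ (Fin 2) | (inner ℝ x n : ℝ) ≤ c},
      x - (2 * ((inner ℝ x n : ℝ) - c)) • n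
        ∈ L ∩ {x : EuclideanSpace ℝ (Fin 2) | (inner ℝ x n : ℝ) ≤ c} := by
  intro L x ⟨hxL, hxc⟩
  have hcx : c < inner ℝ x n := not_le.1 hxc
  refine ⟨Set.mem_iInter.2 fun i => ?_, ?_⟩
  · exact (dist_hyperplaneReflection_le hn hcx.le (ho i)).trans (Set.mem_iInter.1 hxL i)
  · show inner ℝ (hyperplaneReflection n c x) n ≤ c
    rw [inner_hyperplaneReflection hn]
    linarith

/-- Folding an intersection of disks whose centers all lie in a closed half-plane
`ℓ⁺ = {x | ⟪x,n⟫ ≤ c}` (with `‖n‖ = 1`): the reflection across the boundary line of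
`L \ ℓ⁺` is contained in `L ∩ ℓ⁺`, where `L` is the intersection of the disks. -/
theorem disk_intersection_fold {ι : Type*} [Nonempty ι]
    (o : ι → EuclideanSpace ℝ (Fin 2)) (rad : ι → ℝ)
    (n : EuclideanSpace ℝ (Fin 2)) (c : ℝ) (hn : ‖n‖ = 1)
    (ho : ∀ i, (inner ℝ (o i) n : ℝ) ≤ c) :
    let L : Set (EuclideanSpace ℝ (Fin 2)) := ⋂ i, closedBall (o i) (rad i)
    ∀ x ∈ L \ {x : EuclideanSpace ℝ (Fin 2) | (inner ℝ x n : ℝ) ≤ c},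
      x - (2 * ((inner ℝ x n : ℝ) - c)) • n
        ∈ L ∩ {x : EuclideanSpace ℝ (Fin 2) | (inner ℝ x n : ℝ) ≤ c} :=
  disk_intersection_fold_general o rad n c hn ho
end

section
/- Jung's theorem in the plane: if a set S ⊆ ℝ² has diameter at most D (every two points of S are at distance ≤ D), then S is contained in a closed disk of radius D/√3. -/
/-!
By Helly's theorem it suffices to treat at most `d + 1` points, `d` the dimension. A finite set
has a smallest enclosing ball, of centre `c` and radius `r`. If `c` were not in the convex hull of
the points at distance `r`, moving `c` slightly in a direction separating it from that hull would
shrink the ball; so `c = ∑ wᵢ xᵢ` with `dist xᵢ c = r`. The parallel axis identity then gives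
`∑ᵢ wᵢ dist xᵢ xⱼ ² = 2 r²` for every `j`, which is at most `(1 - wⱼ) D²`; summing over the
`n ≤ d + 1` points, `2 n r² ≤ (n - 1) D²`, i.e. `r ≤ √(d / (2 (d + 1))) D`, which is `D / √3` in
the plane.
-/

open Metric Finset Filter Topology Module RealInnerProductSpace

/-- `closedBall c r` is a smallest closed ball containing `s`. -/
def IsChebyshevCenter {α : Type*} [PseudoMetricSpace α] (s : Set α) (c : α) (r : ℝ) : Prop :=
  s ⊆ closedBall c r ∧ ∀ c', ¬s ⊆ ball c' r

theorem Finset.exists_isChebyshevCenter {α : Type*} [PseudoMetricSpace α] [ProperSpace α]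
    (s : Finset α) (hs : s.Nonempty) : ∃ c r, IsChebyshevCenter (s : Set α) c r := by
  have ⟨x₀, hx₀⟩ := hs
  have : Nonempty α := ⟨x₀⟩
  have hcont : Continuous fun c => s.sup' hs (dist · c) :=
    continuous_iff_continuousAt.2 fun c =>
      ContinuousAt.finset_sup'_apply hs fun x _ =>
        (continuous_const.dist continuous_id).continuousAt
  obtain ⟨c, hc⟩ := hcont.exists_forall_le <|
    tendsto_atTop_mono (fun c => s.le_sup' (dist · c) hx₀) (tendsto_dist_left_cocompact_atTop x₀)
  refine ⟨c, s.sup' hs (dist · c), fun x hx => mem_closedBall.2 (s.le_sup' (dist · c) hx),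
    fun c' hc' => ?_⟩
  obtain ⟨x, hx, hxc'⟩ := s.exists_mem_eq_sup' hs (dist · c')
  exact (hc c').not_gt (hxc' ▸ mem_ball.1 (hc' hx))

section InnerProductSpace

variable {F : Type*} [NormedAddCommGroup F] [InnerProductSpace ℝ F]

theorem exists_forall_inner_sub_pos [CompleteSpace F] {K : Set F} (hK : Convex ℝ K)
    (hK' : IsClosed K) {c : F} (hc : c ∉ K) : ∃ v : F, ∀ x ∈ K, 0 < ⟪v, x - c⟫ := by
  obtain ⟨f, u, hfc, hfK⟩ := geometric_hahn_banach_point_closed hK hK' hc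
  refine ⟨(InnerProductSpace.toDual ℝ F).symm f, fun x hx => ?_⟩
  rw [InnerProductSpace.toDual_symm_apply, map_sub]
  linarith [hfK x hx]

theorem eventually_dist_add_smul_lt {x c v : F} (h : 0 < ⟪v, x - c⟫) :
    ∀ᶠ ε in 𝓝[>] (0 : ℝ), dist x (c + ε • v) < dist x c := by
  have hsmall : ∀ᶠ ε in 𝓝[>] (0 : ℝ), ε * ‖v‖ ^ 2 < 2 * ⟪v, x - c⟫ := by
    refine nhdsWithin_le_nhds ?_
    have : Tendsto (fun ε : ℝ => ε * ‖v‖ ^ 2) (𝓝 0) (𝓝 0) :=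
      (continuous_mul_const _).tendsto' 0 0 (zero_mul _)
    exact this.eventually (gt_mem_nhds (by linarith))
  filter_upwards [self_mem_nhdsWithin, hsmall] with ε (hε : 0 < ε) hεv
  have hexpand : dist x (c + ε • v) ^ 2 = dist x c ^ 2 - ε * (2 * ⟪v, x - c⟫ - ε * ‖v‖ ^ 2) := by
    rw [dist_eq_norm, dist_eq_norm, show x - (c + ε • v) = (x - c) - ε • v by abel,
      norm_sub_sq_real, real_inner_smul_right, norm_smul, real_inner_comm, Real.norm_eq_abs,
      mul_pow, sq_abs]
    ring
  refine lt_of_pow_lt_pow_left₀ 2 dist_nonneg ?_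
  rw [hexpand]
  nlinarith

theorem IsChebyshevCenter.mem_convexHull [CompleteSpace F] {s : Finset F} {c : F} {r : ℝ}
    (h : IsChebyshevCenter (s : Set F) c r) :
    c ∈ convexHull ℝ (s.filter (dist · c = r) : Set F) := by
  by_contra hc
  obtain ⟨v, hv⟩ := exists_forall_inner_sub_pos (convex_convexHull ℝ _)
    ((s.filter _).finite_toSet.isClosed_convexHull (𝕜 := ℝ)) hc
  have hdescent : ∀ᶠ ε in 𝓝[>] (0 : ℝ), ∀ x ∈ s, dist x (c + ε • v) < r := by
    refine (eventually_all_finset s).2 fun x hx => ?_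
    obtain hxr | hxr := (mem_closedBall.1 (h.1 hx)).eq_or_lt
    · exact hxr ▸ eventually_dist_add_smul_lt
        (hv x (subset_convexHull ℝ _ (mem_filter.2 ⟨hx, hxr⟩)))
    · refine nhdsWithin_le_nhds (ContinuousAt.eventually_lt ?_ continuousAt_const (by simpa))
      fun_prop
  obtain ⟨ε, hε⟩ := hdescent.exists
  exact h.2 (c + ε • v) fun x hx => mem_ball.2 (hε x hx)

theorem Finset.sum_mul_dist_sq_eq {s : Finset F} {w : F → ℝ} {c : F} (hw : ∑ x ∈ s, w x = 1)
    (hc : ∑ x ∈ s, w x • x = c) (y : F) :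
    ∑ x ∈ s, w x * dist x y ^ 2 = ∑ x ∈ s, w x * dist x c ^ 2 + dist c y ^ 2 := by
  have hcross : ∑ x ∈ s, w x * ⟪x - c, c - y⟫ = 0 := by
    simp_rw [← real_inner_smul_left, ← sum_inner, smul_sub, sum_sub_distrib, hc, ← sum_smul, hw,
      one_smul, sub_self, inner_zero_left]
  have hsplit : ∀ x, dist x y ^ 2 = dist x c ^ 2 + 2 * ⟪x - c, c - y⟫ + dist c y ^ 2 := by
    intro x
    rw [dist_eq_norm, dist_eq_norm, dist_eq_norm, ← norm_add_sq_real, sub_add_sub_cancel]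
  calc ∑ x ∈ s, w x * dist x y ^ 2
      = ∑ x ∈ s, (w x * dist x c ^ 2 + 2 * (w x * ⟪x - c, c - y⟫) + w x * dist c y ^ 2) :=
        sum_congr rfl fun x _ => by rw [hsplit]; ring
    _ = ∑ x ∈ s, w x * dist x c ^ 2 + dist c y ^ 2 := by
        rw [sum_add_distrib, sum_add_distrib, ← mul_sum, hcross, ← sum_mul, hw]; ring

theorem two_mul_card_mul_sq_le_of_mem_convexHull {T : Finset F} {c : F} {r D : ℝ}
    (hc : c ∈ convexHull ℝ (T : Set F)) (hr : ∀ x ∈ T, dist x c = r)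
    (hD : ∀ x ∈ T, ∀ y ∈ T, dist x y ≤ D) :
    2 * #T * r ^ 2 ≤ (#T - 1) * D ^ 2 := by
  classical
  obtain ⟨w, hw₀, hw₁, hwc⟩ := Finset.mem_convexHull'.1 hc
  have hvertex : ∀ y ∈ T, 2 * r ^ 2 ≤ (1 - w y) * D ^ 2 := fun y hy =>
    calc 2 * r ^ 2 = ∑ x ∈ T, w x * dist x y ^ 2 := by
          rw [sum_mul_dist_sq_eq hw₁ hwc, sum_congr rfl fun x hx => by rw [hr x hx],
            ← sum_mul, hw₁, dist_comm, hr y hy]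
          ring
      _ = ∑ x ∈ T.erase y, w x * dist x y ^ 2 := by
          rw [sum_erase _ (by rw [dist_self]; ring)]
      _ ≤ ∑ x ∈ T.erase y, w x * D ^ 2 := by
          refine sum_le_sum fun x hx => mul_le_mul_of_nonneg_left ?_ (hw₀ x (mem_of_mem_erase hx))
          exact pow_le_pow_left₀ dist_nonneg (hD x (mem_of_mem_erase hx) y hy) 2
      _ = (1 - w y) * D ^ 2 := by rw [← sum_mul, sum_erase_eq_sub hy, hw₁]
  calc 2 * #T * r ^ 2 = ∑ y ∈ T, 2 * r ^ 2 := by rw [sum_const, nsmul_eq_mul]; ring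
    _ ≤ ∑ y ∈ T, (1 - w y) * D ^ 2 := sum_le_sum hvertex
    _ = (#T - 1) * D ^ 2 := by
        rw [← sum_mul, sum_sub_distrib, hw₁, sum_const, nsmul_eq_mul, mul_one]

theorem IsChebyshevCenter.two_mul_mul_sq_le [CompleteSpace F] {s : Finset F} {c : F} {r D : ℝ}
    (h : IsChebyshevCenter (s : Set F) c r) (hD : ∀ x ∈ s, ∀ y ∈ s, dist x y ≤ D) {N : ℕ}
    (hN : #s ≤ N) : 2 * N * r ^ 2 ≤ (N - 1) * D ^ 2 := by
  set T := s.filter (dist · c = r)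
  have hT := two_mul_card_mul_sq_le_of_mem_convexHull h.mem_convexHull
    (fun x hx => (mem_filter.1 hx).2)
    fun x hx y hy => hD x (filter_subset _ _ hx) y (filter_subset _ _ hy)
  have hT₁ : (1 : ℝ) ≤ #T := by
    exact_mod_cast card_pos.2 (coe_nonempty.1 (convexHull_nonempty_iff.1 ⟨c, h.mem_convexHull⟩))
  have hTN : (#T : ℝ) ≤ N := by exact_mod_cast (card_le_card (filter_subset _ s)).trans hN
  -- `(n - 1) / (2 n)` increases with `n`
  nlinarith [sq_nonneg D, sq_nonneg r]

theorem Finset.exists_forall_two_mul_mul_dist_sq_le [FiniteDimensional ℝ F] (s : Finset F) {D : ℝ}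
    (hD : ∀ x ∈ s, ∀ y ∈ s, dist x y ≤ D) {N : ℕ} (hN : #s ≤ N) :
    ∃ c, ∀ x ∈ s, 2 * N * dist x c ^ 2 ≤ (N - 1) * D ^ 2 := by
  rcases s.eq_empty_or_nonempty with rfl | hs
  · exact ⟨0, by simp⟩
  obtain ⟨c, r, h⟩ := s.exists_isChebyshevCenter hs
  refine ⟨c, fun x hx => le_trans ?_ (h.two_mul_mul_sq_le hD hN)⟩
  gcongr
  exact mem_closedBall.1 (h.1 hx)

theorem jung_theorem [FiniteDimensional ℝ F] (S : Set F) {D : ℝ}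
    (hD : ∀ x ∈ S, ∀ y ∈ S, dist x y ≤ D) :
    ∃ c, S ⊆ closedBall c (√(finrank ℝ F / (2 * (finrank ℝ F + 1))) * D) := by
  rcases S.eq_empty_or_nonempty with rfl | ⟨x₀, hx₀⟩
  · exact ⟨0, Set.empty_subset _⟩
  have hD₀ : 0 ≤ D := dist_self x₀ ▸ hD x₀ hx₀ x₀ hx₀
  set d := finrank ℝ F
  have hradius : ∀ a : ℝ, 0 ≤ a → 2 * (d + 1 : ℕ) * a ^ 2 ≤ ((d + 1 : ℕ) - 1) * D ^ 2 →
      a ≤ √(d / (2 * (d + 1))) * D := by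
    intro a ha h
    rw [← Real.sqrt_sq hD₀, ← Real.sqrt_mul (by positivity), Real.le_sqrt ha (by positivity),
      div_mul_eq_mul_div, le_div_iff₀ (by positivity)]
    push_cast at h
    linarith
  classical
  obtain ⟨c, hc⟩ : (⋂ x : S, closedBall (x : F) (√(d / (2 * (d + 1))) * D)).Nonempty := by
    refine Convex.helly_theorem_compact' (𝕜 := ℝ) (fun _ => convex_closedBall _ _)
      (fun _ => isCompact_closedBall _ _) fun J hJ => ?_
    obtain ⟨c, hc⟩ := (J.image ((↑) : S → F)).exists_forall_two_mul_mul_dist_sq_le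
      (by simpa using fun x hx _ y hy _ => hD x hx y hy) (card_image_le.trans hJ)
    exact ⟨c, Set.mem_iInter₂.2 fun x hx =>
      mem_closedBall_comm.1 (hradius _ dist_nonneg (hc x (mem_image_of_mem _ hx)))⟩
  exact ⟨c, fun x hx => mem_closedBall_comm.1 (Set.mem_iInter.1 hc ⟨x, hx⟩)⟩

end InnerProductSpace

theorem jung_plane_general (S : Set (EuclideanSpace ℝ (Fin 2))) (D : ℝ)
    (hD : ∀ x ∈ S, ∀ y ∈ S, dist x y ≤ D) :
    ∃ c : EuclideanSpace ℝ (Fin 2), S ⊆ closedBall c (D / Real.sqrt 3) := by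
  obtain ⟨c, hc⟩ := jung_theorem S hD
  refine ⟨c, hc.trans_eq ?_⟩
  rw [finrank_euclideanSpace_fin]
  norm_num [div_eq_inv_mul]

/-- Jung's theorem in the plane: a set of diameter at most `D` in `ℝ²` is contained in
a closed disk of radius `D/√3`. -/
theorem jung_plane (S : Set (EuclideanSpace ℝ (Fin 2))) (D : ℝ)
    (hb : Bornology.IsBounded S)
    (hD : ∀ x ∈ S, ∀ y ∈ S, dist x y ≤ D) :
    ∃ c : EuclideanSpace ℝ (Fin 2), S ⊆ closedBall c (D / Real.sqrt 3) :=
  jung_plane_general S D hD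
end

section
/- For a bounded set S ⊆ ℝ² with circumradius R (the infimum over centers c of sup_{x∈S} dist(x,c)) and diameter D, one has √3·R ≤ D ≤ 2R. -/
/-!
By Helly's theorem in the plane, `S` lies in a ball of radius `D / √3` as soon as any three of
its points do. For three points at mutual distance at most `D`, look at the angle opposite the
longest side: if it is not acute, the midpoint of that side is a center of radius `D / 2`;
otherwise the circumcenter is, and its radius is at most `D / √3` because that angle, being the
largest, is at least `π / 3`. The bound `D ≤ 2 R` is the triangle inequality through the center
of any ball containing `S`.
-/

open Metric
open scoped RealInnerProductSpace

lemma le_div_sqrt_three_of_three_mul_sq_le {a b : ℝ} (hb : 0 ≤ b) (h : 3 * a ^ 2 ≤ b ^ 2) :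
    a ≤ b / √3 := by
  have h3 : (√3) ^ 2 = 3 := Real.sq_sqrt (by norm_num)
  rw [le_div_iff₀ (by positivity)]
  nlinarith [Real.sqrt_nonneg 3]

section InnerProductSpace

variable {E : Type*} [NormedAddCommGroup E] [InnerProductSpace ℝ E]

lemma exists_circumcenter_of_inner_pos (u v : E) (h0 : 0 < ⟪u, v⟫)
    (hu : 2 * ⟪u, v⟫ ≤ ‖u‖ ^ 2) (hv : 2 * ⟪u, v⟫ ≤ ‖v‖ ^ 2) :
    ∃ w : E, ‖u - w‖ = ‖w‖ ∧ ‖v - w‖ = ‖w‖ ∧ 3 * ‖w‖ ^ 2 ≤ ‖u - v‖ ^ 2 := by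
  obtain ⟨a, huu⟩ : ∃ a, ⟪u, u⟫ = a := ⟨_, rfl⟩
  obtain ⟨b, hvv⟩ : ∃ b, ⟪v, v⟫ = b := ⟨_, rfl⟩
  obtain ⟨c, huv⟩ : ∃ c, ⟪u, v⟫ = c := ⟨_, rfl⟩
  have hvu : ⟪v, u⟫ = c := real_inner_comm u v ▸ huv
  rw [← real_inner_self_eq_norm_sq, huu, huv] at hu
  rw [← real_inner_self_eq_norm_sq, hvv, huv] at hv
  rw [huv] at h0
  have hab : 4 * c ^ 2 ≤ a * b := by nlinarith
  obtain ⟨k, hk⟩ : ∃ k : ℝ, k * (2 * (a * b - c ^ 2)) = 1 := ⟨_, inv_mul_cancel₀ (by nlinarith)⟩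
  have hk0 : 0 < k := pos_of_mul_pos_left (hk ▸ one_pos) (by nlinarith)
  -- the circumcenter of `0, u, v`: the solution of `⟪w, u⟫ = ‖u‖² / 2`, `⟪w, v⟫ = ‖v‖² / 2`
  obtain ⟨w, hw⟩ : ∃ w : E, w = k • ((b * (a - c)) • u + (a * (b - c)) • v) := ⟨_, rfl⟩
  have hwu : ⟪w, u⟫ = a / 2 := by
    simp only [hw, real_inner_smul_left, inner_add_left, huu, hvu]
    linear_combination (a / 2) * hk
  have hwv : ⟪w, v⟫ = b / 2 := by
    simp only [hw, real_inner_smul_left, inner_add_left, huv, hvv]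
    linear_combination (b / 2) * hk
  have hww : ⟪w, w⟫ = k * a * b * (a + b - 2 * c) / 2 := by
    nth_rw 2 [hw]
    rw [real_inner_smul_right, inner_add_right, real_inner_smul_right, real_inner_smul_right,
      hwu, hwv]
    ring
  have hd : ‖u - v‖ ^ 2 = a + b - 2 * c := by
    rw [← real_inner_self_eq_norm_sq, inner_sub_sub_self, huu, hvv, huv, hvu]; ring
  refine ⟨w, ?_, ?_, ?_⟩
  · rw [← sq_eq_sq₀ (norm_nonneg _) (norm_nonneg _), norm_sub_sq_real, real_inner_comm, hwu,
      ← real_inner_self_eq_norm_sq, huu]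
    ring
  · rw [← sq_eq_sq₀ (norm_nonneg _) (norm_nonneg _), norm_sub_sq_real, real_inner_comm, hwv,
      ← real_inner_self_eq_norm_sq, hvv]
    ring
  · -- `3 ‖w‖² ≤ ‖u - v‖²` reduces to `4 c² ≤ a b`, i.e. to the angle at `0` being at least `π / 3`
    have hd0 : 0 ≤ a + b - 2 * c := hd ▸ sq_nonneg _
    rw [← real_inner_self_eq_norm_sq, hww, hd]
    nlinarith [mul_nonneg (mul_nonneg hd0 hk0.le) (sub_nonneg.2 hab)]

lemma exists_three_mul_sq_le_of_norm_le (u v : E) (hu : ‖u‖ ≤ ‖u - v‖) (hv : ‖v‖ ≤ ‖u - v‖) :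
    ∃ w : E, 3 * ‖u - w‖ ^ 2 ≤ ‖u - v‖ ^ 2 ∧ 3 * ‖v - w‖ ^ 2 ≤ ‖u - v‖ ^ 2 ∧
      3 * ‖w‖ ^ 2 ≤ ‖u - v‖ ^ 2 := by
  have huv : ‖u - v‖ ^ 2 = ‖u‖ ^ 2 - 2 * ⟪u, v⟫ + ‖v‖ ^ 2 := norm_sub_sq_real u v
  rcases le_or_gt ⟪u, v⟫ 0 with hobtuse | hacute
  · have half : ∀ x : E, ‖(2 : ℝ)⁻¹ • x‖ ^ 2 = ‖x‖ ^ 2 / 4 := fun x ↦ by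
      rw [norm_smul, mul_pow, norm_inv, Real.norm_two]; ring
    have huv₀ := sq_nonneg ‖u - v‖
    refine ⟨(2 : ℝ)⁻¹ • (u + v), ?_, ?_, ?_⟩
    · rw [show u - (2 : ℝ)⁻¹ • (u + v) = (2 : ℝ)⁻¹ • (u - v) by module, half]
      linarith
    · rw [show v - (2 : ℝ)⁻¹ • (u + v) = -((2 : ℝ)⁻¹ • (u - v)) by module, norm_neg, half]
      linarith
    · rw [half, norm_add_sq_real]
      linarith
  · have hu2 := pow_le_pow_left₀ (norm_nonneg _) hu 2
    have hv2 := pow_le_pow_left₀ (norm_nonneg _) hv 2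
    obtain ⟨w, hwu, hwv, hw⟩ := exists_circumcenter_of_inner_pos u v hacute (by linarith)
      (by linarith)
    exact ⟨w, hwu ▸ hw, hwv ▸ hw, hw⟩

lemma exists_subset_closedBall_of_longest_side (x y z : E) (hxz : dist x z ≤ dist x y)
    (hyz : dist y z ≤ dist x y) :
    ∃ p : E, ({x, y, z} : Set E) ⊆ closedBall p (dist x y / √3) := by
  simp only [dist_eq_norm] at hxz hyz ⊢
  obtain ⟨w, hx, hy, hz⟩ := exists_three_mul_sq_le_of_norm_le (x - z) (y - z)
    (by rwa [sub_sub_sub_cancel_right]) (by rwa [sub_sub_sub_cancel_right])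
  rw [sub_sub_sub_cancel_right] at hx hy hz
  refine ⟨z + w, ?_⟩
  simp only [Set.insert_subset_iff, Set.singleton_subset_iff, mem_closedBall, dist_eq_norm]
  refine ⟨?_, ?_, ?_⟩ <;> apply le_div_sqrt_three_of_three_mul_sq_le (norm_nonneg _)
  · rwa [← sub_sub]
  · rwa [← sub_sub]
  · rwa [sub_add_cancel_left, norm_neg]

lemma exists_triple_subset_closedBall {x y z : E} {D : ℝ} (hxy : dist x y ≤ D)
    (hxz : dist x z ≤ D) (hyz : dist y z ≤ D) :
    ∃ p : E, ({x, y, z} : Set E) ⊆ closedBall p (D / √3) := by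
  have key : ∀ a b c : E, dist a c ≤ dist a b → dist b c ≤ dist a b → dist a b ≤ D →
      ∃ p : E, ({a, b, c} : Set E) ⊆ closedBall p (D / √3) := by
    intro a b c hac hbc hab
    obtain ⟨p, hp⟩ := exists_subset_closedBall_of_longest_side a b c hac hbc
    exact ⟨p, hp.trans (closedBall_subset_closedBall (by gcongr))⟩
  by_cases h₁ : dist x z ≤ dist x y ∧ dist y z ≤ dist x y
  · exact key x y z h₁.1 h₁.2 hxy
  by_cases h₂ : dist x y ≤ dist x z ∧ dist z y ≤ dist x z
  · rw [Set.pair_comm]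
    exact key x z y h₂.1 h₂.2 hxz
  · rw [dist_comm z y] at h₂
    obtain ⟨p, hp⟩ := key y z x (by rw [dist_comm]; grind) (by rw [dist_comm]; grind) hyz
    rw [Set.pair_comm, Set.insert_comm] at hp
    exact ⟨p, hp⟩

lemma exists_subset_closedBall_of_card_le_three {s : Finset E} (hs : s.card ≤ 3) {D : ℝ}
    (hD : ∀ x ∈ s, ∀ y ∈ s, dist x y ≤ D) :
    ∃ p : E, (s : Set E) ⊆ closedBall p (D / √3) := by
  classical
  obtain h | h | h | h : s.card = 0 ∨ s.card = 1 ∨ s.card = 2 ∨ s.card = 3 := by omega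
  · exact ⟨0, by simp [Finset.card_eq_zero.1 h]⟩
  · obtain ⟨x, rfl⟩ := Finset.card_eq_one.1 h
    have hxx := hD x (by simp) x (by simp)
    simpa using exists_triple_subset_closedBall hxx hxx hxx
  · obtain ⟨x, y, -, rfl⟩ := Finset.card_eq_two.1 h
    have hxy := hD x (by simp) y (by simp)
    simpa using exists_triple_subset_closedBall hxy hxy (hD y (by simp) y (by simp))
  · obtain ⟨x, y, z, -, -, -, rfl⟩ := Finset.card_eq_three.1 h
    simpa using exists_triple_subset_closedBall (hD x (by simp) y (by simp))
      (hD x (by simp) z (by simp)) (hD y (by simp) z (by simp))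

theorem exists_subset_closedBall_diam_div_sqrt_three [FiniteDimensional ℝ E]
    (hE : Module.finrank ℝ E ≤ 2) {S : Set E} (hS : Bornology.IsBounded S) :
    ∃ c : E, S ⊆ closedBall c (diam S / √3) := by
  classical
  have hfinite : ∀ I : Finset S, I.card ≤ Module.finrank ℝ E + 1 →
      (⋂ i ∈ I, closedBall (i : E) (diam S / √3)).Nonempty := by
    intro I hI
    obtain ⟨p, hp⟩ := exists_subset_closedBall_of_card_le_three
      (s := I.map (Function.Embedding.subtype _)) (by simp only [Finset.card_map]; omega)
      (by simpa using fun x hx _ y hy _ ↦ dist_le_diam_of_mem hS hx hy)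
    exact ⟨p, Set.mem_iInter₂.2 fun i hi ↦
      mem_closedBall_comm.1 (hp (Finset.mem_coe.2 (Finset.mem_map_of_mem _ hi)))⟩
  obtain ⟨c, hc⟩ := Convex.helly_theorem_compact' (𝕜 := ℝ) (fun _ ↦ convex_closedBall _ _)
    (fun _ ↦ isCompact_closedBall _ _) hfinite
  exact ⟨c, fun x hx ↦ mem_closedBall_comm.1 (Set.mem_iInter.1 hc ⟨x, hx⟩)⟩

end InnerProductSpace

section MetricSpace

variable {X : Type*} [PseudoMetricSpace X] {S : Set X}

lemma bddBelow_radii_of_nonempty (hS : S.Nonempty) :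
    BddBelow {t : ℝ | ∃ c : X, S ⊆ closedBall c t} := by
  obtain ⟨a, ha⟩ := hS
  refine ⟨0, ?_⟩
  rintro t ⟨c, hc⟩
  exact dist_nonneg.trans (hc ha)

lemma diam_le_two_mul_sInf_radii (hS : S.Nonempty) (hb : Bornology.IsBounded S) :
    diam S ≤ 2 * sInf {t : ℝ | ∃ c : X, S ⊆ closedBall c t} := by
  obtain ⟨a, ha⟩ := hS
  obtain ⟨r, hr⟩ := hb.subset_closedBall a
  rw [← div_le_iff₀' two_pos]
  refine le_csInf ⟨r, a, hr⟩ ?_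
  rintro t ⟨c, hc⟩
  exact (div_le_iff₀' two_pos).2 (diam_le_of_subset_closedBall (dist_nonneg.trans (hc ha)) hc)

end MetricSpace

/-- For a bounded planar set with at least two points, circumradius `R` and diameter `D`
satisfy `√3·R ≤ D ≤ 2·R`. -/
theorem jung_inequalities (S : Set (EuclideanSpace ℝ (Fin 2)))
    (hb : Bornology.IsBounded S)
    (hne : ∃ a ∈ S, ∃ b ∈ S, a ≠ b) :
    let R : ℝ := sInf {t : ℝ | ∃ c : EuclideanSpace ℝ (Fin 2), S ⊆ closedBall c t}
    Real.sqrt 3 * R ≤ Metric.diam S ∧ Metric.diam S ≤ 2 * R := by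
  obtain ⟨a, ha, -⟩ := hne
  obtain ⟨c, hc⟩ := exists_subset_closedBall_diam_div_sqrt_three finrank_euclideanSpace_fin.le hb
  have hR := csInf_le (bddBelow_radii_of_nonempty ⟨a, ha⟩) ⟨c, hc⟩
  exact ⟨(le_div_iff₀' (by positivity)).1 hR, diam_le_two_mul_sInf_radii ⟨a, ha⟩ hb⟩
end
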